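/- arXiv:2508.20638 — 4 statements merged into one kernel-verified Lean document; each statement's English description precedes it below -/
import Mathlib

section
/- The 5×5 matrix 𝒜(W) of the quasi-linear form of the extended 1D blood flow system has eigenvalues λ₁ = u - c, λ₂ = λ₃ = λ₄ = 0, λ₅ = u + c, where c = sqrt((K/ρ)·a·φ'(a)), i.e., the characteristic polynomial of 𝒜(W) equals λ³·(λ² - 2uλ + u² - c²). -/
/-!
`𝒜` is block upper triangular, with the companion block `[[0, 1], [c² - u², 2u]]` over a zero
`3 × 3` block, so its characteristic polynomial is `λ³ (λ² - 2uλ + u² - c²)`. Reading `c²` back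
as `(K/ρ) a φ'(a)` needs the radicand to be nonnegative (`Real.sqrt` is `0` on negatives); it is,
since `φ'(a) > 0` when `m > 0 ≥ n`.
-/

open Polynomial

namespace Matrix

variable {R : Type*} [CommRing R]

theorem charpoly_fromBlocks_zero_zero {m n : Type*} [Fintype m] [Fintype n] [DecidableEq m]
    [DecidableEq n] (M : Matrix m m R) (B : Matrix m n R) :
    (fromBlocks M B 0 0).charpoly = M.charpoly * X ^ Fintype.card n := by
  rw [charpoly_fromBlocks_zero₂₁, charpoly_zero]

theorem charpoly_companion_block_fin_five [Nontrivial R] (p t q r s : R) :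
    (!![0, 1, 0, 0, 0;
        p, t, q, r, s;
        0, 0, 0, 0, 0;
        0, 0, 0, 0, 0;
        0, 0, 0, 0, 0] : Matrix (Fin 5) (Fin 5) R).charpoly
      = X ^ 3 * (X ^ 2 - C t * X - C p) := by
  have hblocks : (!![0, 1, 0, 0, 0; p, t, q, r, s; 0, 0, 0, 0, 0; 0, 0, 0, 0, 0;
      0, 0, 0, 0, 0] : Matrix (Fin 5) (Fin 5) R) =
      reindex finSumFinEquiv finSumFinEquiv
        (fromBlocks !![0, 1; p, t] !![0, 0, 0; q, r, s] (0 : Matrix (Fin 3) (Fin 2) R) 0) := by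
    ext i j
    fin_cases i <;> fin_cases j <;> rfl
  rw [hblocks, charpoly_reindex, charpoly_fromBlocks_zero_zero, charpoly_fin_two,
    trace_fin_two_of, det_fin_two_of, Fintype.card_fin, zero_add, zero_mul, one_mul, zero_sub,
    map_neg]
  ring

end Matrix

theorem mul_rpow_sub_mul_rpow_pos {m n a : ℝ} (hm : 0 < m) (hn : n ≤ 0) (ha : 0 < a) :
    0 < m * a ^ (m - 1) - n * a ^ (n - 1) := by
  have hm_term : 0 < m * a ^ (m - 1) := mul_pos hm (Real.rpow_pos_of_pos ha _)
  have hn_term : n * a ^ (n - 1) ≤ 0 :=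
    mul_nonpos_of_nonpos_of_nonneg hn (Real.rpow_pos_of_pos ha _).le
  linarith

theorem charpoly_blood_flow_matrix_general (m n ρ K A A₀ u : ℝ)
    (hm : 0 < m) (hn2 : n ≤ 0)
    (hρ : 0 < ρ) (hK : 0 < K) (hA : 0 < A) (hA₀ : 0 < A₀) :
    let a := A / A₀
    let dφ := m * a ^ (m - 1) - n * a ^ (n - 1)
    let φ := a ^ m - a ^ n
    let c := Real.sqrt ((K / ρ) * a * dφ)
    let 𝒜 : Matrix (Fin 5) (Fin 5) ℝ :=
      !![0, 1, 0, 0, 0;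
         -u ^ 2 + (K / ρ) * a * dφ, 2 * u, (A / ρ) * φ, -(a ^ 2) * (K / ρ) * dφ, A / ρ;
         0, 0, 0, 0, 0;
         0, 0, 0, 0, 0;
         0, 0, 0, 0, 0]
    𝒜.charpoly = X ^ 3 * (X ^ 2 - C (2 * u) * X + C (u ^ 2 - c ^ 2)) := by
  intro a dφ φ c 𝒜
  have ha : 0 < a := div_pos hA hA₀
  have hdφ : 0 < dφ := mul_rpow_sub_mul_rpow_pos hm hn2 ha
  have hc : c ^ 2 = (K / ρ) * a * dφ :=
    Real.sq_sqrt (mul_pos (mul_pos (div_pos hK hρ) ha) hdφ).le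
  have hconst : u ^ 2 - c ^ 2 = -(-u ^ 2 + (K / ρ) * a * dφ) := by rw [hc]; ring
  rw [hconst, map_neg, ← sub_eq_add_neg]
  exact Matrix.charpoly_companion_block_fin_five _ _ _ _ _

/-- The characteristic polynomial of the 5×5 quasi-linear matrix 𝒜(W) of the
extended 1D blood flow system equals λ³·(λ² - 2uλ + u² - c²), so the eigenvalues
are u - c, 0 (triple), u + c. -/
theorem charpoly_blood_flow_matrix (m n ρ K A A₀ u : ℝ)
    (hm : 0 < m) (hn1 : -2 < n) (hn2 : n ≤ 0)
    (hρ : 0 < ρ) (hK : 0 < K) (hA : 0 < A) (hA₀ : 0 < A₀) :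
    let a := A / A₀
    let dφ := m * a ^ (m - 1) - n * a ^ (n - 1)
    let φ := a ^ m - a ^ n
    let c := Real.sqrt ((K / ρ) * a * dφ)
    let 𝒜 : Matrix (Fin 5) (Fin 5) ℝ :=
      !![0, 1, 0, 0, 0;
         -u ^ 2 + (K / ρ) * a * dφ, 2 * u, (A / ρ) * φ, -(a ^ 2) * (K / ρ) * dφ, A / ρ;
         0, 0, 0, 0, 0;
         0, 0, 0, 0, 0;
         0, 0, 0, 0, 0]
    𝒜.charpoly = X ^ 3 * (X ^ 2 - C (2 * u) * X + C (u ^ 2 - c ^ 2)) :=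
  charpoly_blood_flow_matrix_general m n ρ K A A₀ u hm hn2 hρ hK hA hA₀
end

section
/- Conversely, if q* is constant and the energy Γ(x) = (ρ/2)·(q*/A*(x))² + K(x)·φ(A*(x)/A₀(x)) + p_e(x) is constant along a smooth positive function A*(x), with K, A₀, p_e smooth, then (A*, q*) is a stationary solution of the 1D blood flow equations with μ = 0 and g = 0. -/
/-! Subtracting the kinetic term from the constant energy `Γ` expresses the pressure
`K φ(A*/A₀) + pₑ` as a constant minus `(ρ/2)(q*/A*)²`, so its derivative is
`ρ q*² A*' / A*³`; multiplied by `A*/ρ`, this cancels `∂ₓ(q*²/A*) = -q*² A*' / A*²`. -/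

section Bernoulli

variable {A P : ℝ → ℝ} {A' x : ℝ}

theorem HasDerivAt.const_div_of_ne_zero (c : ℝ) (hA : HasDerivAt A A' x) (hx : A x ≠ 0) :
    HasDerivAt (fun y => c / A y) (-(c * A') / A x ^ 2) x :=
  ((hasDerivAt_const x c).div hA hx).congr_deriv (by ring)

theorem hasDerivAt_kinetic (ρ q : ℝ) (hA : HasDerivAt A A' x) (hx : A x ≠ 0) :
    HasDerivAt (fun y => ρ / 2 * (q / A y) ^ 2) (-(ρ * q ^ 2 * A') / A x ^ 3) x :=
  (((hA.const_div_of_ne_zero q hx).pow 2).const_mul (ρ / 2)).congr_deriv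
    (by push_cast; field_simp)

theorem hasDerivAt_of_kinetic_add_eq_const {ρ q c : ℝ} (hA : HasDerivAt A A' x)
    (hx : A x ≠ 0) (hP : ∀ y, ρ / 2 * (q / A y) ^ 2 + P y = c) :
    HasDerivAt P (ρ * q ^ 2 * A' / A x ^ 3) x := by
  have hP_eq : P = fun y => c - ρ / 2 * (q / A y) ^ 2 :=
    funext fun y => eq_sub_of_add_eq' (hP y)
  rw [hP_eq]
  exact ((hasDerivAt_const x c).sub (hasDerivAt_kinetic ρ q hA hx)).congr_deriv (by ring)

theorem stationary_momentum_of_kinetic_add_eq_const {ρ q c : ℝ} (hρ : ρ ≠ 0)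
    (hA : DifferentiableAt ℝ A x) (hx : A x ≠ 0)
    (hP : ∀ y, ρ / 2 * (q / A y) ^ 2 + P y = c) :
    deriv (fun y => q ^ 2 / A y) x + A x / ρ * deriv P x = 0 := by
  rw [(hA.hasDerivAt.const_div_of_ne_zero _ hx).deriv,
    (hasDerivAt_of_kinetic_add_eq_const hA.hasDerivAt hx hP).deriv]
  field_simp
  ring

end Bernoulli

theorem stationary_of_energy_constant_general (ρ qstar : ℝ)
    (hρ : 0 < ρ)
    (K A₀ pe Astar : ℝ → ℝ)
    (hApos : ∀ x, 0 < Astar x)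
    (hAd : Differentiable ℝ Astar)
    (φ : ℝ → ℝ)
    (hΓ : ∀ x y,
      ρ / 2 * (qstar / Astar x) ^ 2 + K x * φ (Astar x / A₀ x) + pe x
        = ρ / 2 * (qstar / Astar y) ^ 2 + K y * φ (Astar y / A₀ y) + pe y) :
    ∀ x,
      deriv (fun y => qstar ^ 2 / Astar y) x
        + (Astar x / ρ) * deriv (fun y => K y * φ (Astar y / A₀ y) + pe y) x = 0 := by
  intro x
  exact stationary_momentum_of_kinetic_add_eq_const hρ.ne' (hAd x) (hApos x).ne'
    fun y => (add_assoc _ _ _).symm.trans (hΓ y x)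

/-- Conversely, if q* is constant and the energy
Γ(x) = (ρ/2)(q*/A*)² + K·φ(A*/A₀) + p_e is constant along a smooth positive A*,
then (A*, q*) satisfies the stationary momentum equation with μ = 0 and g = 0. -/
theorem stationary_of_energy_constant (m n ρ qstar : ℝ)
    (hm : 0 < m) (hn1 : -2 < n) (hn2 : n ≤ 0) (hρ : 0 < ρ)
    (K A₀ pe Astar : ℝ → ℝ)
    (hKpos : ∀ x, 0 < K x) (hA₀pos : ∀ x, 0 < A₀ x) (hApos : ∀ x, 0 < Astar x)
    (hKd : Differentiable ℝ K) (hA₀d : Differentiable ℝ A₀)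
    (hped : Differentiable ℝ pe) (hAd : Differentiable ℝ Astar)
    (φ : ℝ → ℝ) (hφ : ∀ a, φ a = a ^ m - a ^ n)
    (hΓ : ∀ x y,
      ρ / 2 * (qstar / Astar x) ^ 2 + K x * φ (Astar x / A₀ x) + pe x
        = ρ / 2 * (qstar / Astar y) ^ 2 + K y * φ (Astar y / A₀ y) + pe y) :
    ∀ x,
      deriv (fun y => qstar ^ 2 / Astar y) x
        + (Astar x / ρ) * deriv (fun y => K y * φ (Astar y / A₀ y) + pe y) x = 0 :=
  stationary_of_energy_constant_general ρ qstar hρ K A₀ pe Astar hApos hAd φ hΓ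
end

section
/- Under the hypotheses that the path-conservative fluctuations satisfy D^±(W, W) = 0 and vanish on pairs (W_l, W_r) with q_l = q_r and Γ(W_l) = Γ(W_r), and that the reconstruction operator reproduces exactly the numerical stationary approximations at interfaces and quadrature points, the semi-discrete well-balanced scheme admits the approximated stationary cell averages {Ũ*_i} as an equilibrium: the right-hand side of the scheme evaluated at {Ũ*_i} is identically zero for all cells i. -/
/-- The approximated stationary cell averages are an equilibrium of the
semi-discrete well-balanced scheme: if the fluctuations vanish on pairs with
equal discharge and energy, the pairs of stationary interface values satisfy
these conditions, and the well-balanced reconstruction reproduces the stationary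
point values at interfaces and quadrature points, then the right-hand side of
the scheme vanishes in every cell. -/
theorem wb_scheme_equilibrium {𝕎 E : Type*} [AddCommGroup E] [Module ℝ E]
    (M : ℕ) (Δx : ℝ)
    (Dm Dp : 𝕎 → 𝕎 → E) (F : 𝕎 → E)
    (Ssig : 𝕎 → ℝ → E) (R : 𝕎 → E)
    (q Γ : 𝕎 → ℝ)
    (β : Fin M → ℝ)
    (P : ℤ → ℝ → 𝕎) (xI : ℤ → ℝ) (xq : ℤ → Fin M → ℝ)
    (Wm Wp : ℤ → 𝕎) (Wq : ℤ → Fin M → 𝕎)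
    (hDwb : ∀ Wl Wr, q Wl = q Wr → Γ Wl = Γ Wr → Dm Wl Wr = 0 ∧ Dp Wl Wr = 0)
    (hint : ∀ i, q (Wm i) = q (Wp i) ∧ Γ (Wm i) = Γ (Wp i))
    (hrecR : ∀ i, P i (xI i) = Wm i)
    (hrecL : ∀ i, P i (xI (i - 1)) = Wp (i - 1))
    (hrecQ : ∀ i mq, P i (xq i mq) = Wq i mq) :
    ∀ i : ℤ,
      -(Δx⁻¹) •
          (Dm (P i (xI i)) (P (i + 1) (xI i))
            + Dp (P (i - 1) (xI (i - 1))) (P i (xI (i - 1)))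
            + F (P i (xI i)) - F (P i (xI (i - 1)))
            - F (Wm i) + F (Wp (i - 1)))
        - ∑ mq : Fin M, β mq • (Ssig (P i (xq i mq)) (xq i mq) - Ssig (Wq i mq) (xq i mq))
        + ∑ mq : Fin M, β mq • (R (P i (xq i mq)) - R (Wq i mq)) = 0 := by
  intro i
  have h1 : P (i + 1) (xI i) = Wp i := by
    have := hrecL (i + 1); simpa using this
  have hd1 := hDwb (Wm i) (Wp i) (hint i).1 (hint i).2
  have hd2 := hDwb (Wm (i - 1)) (Wp (i - 1)) (hint (i - 1)).1 (hint (i - 1)).2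
  simp [hrecR, hrecL, hrecQ, h1, hd1.1, hd2.2]
end

section
/- The GHR-based path-conservative fluctuations D⁺(W_l, W_r) = F(W₀⁺) - 𝔽(W₀⁻, W₀⁺) and D⁻(W_l, W_r) = 𝔽(W₀⁻, W₀⁺) - F(W₀⁻) are well-balanced: if q_l = q_r and Γ(W_l) = Γ(W_r), then A⁻ = A⁺ (assuming the equations defining A^± have unique solutions in the relevant branch), hence W₀⁻ = W₀⁺ and D^±(W_l, W_r) = 0. -/
/-- The GHR-based path-conservative fluctuations are well-balanced: if q_l = q_r
and Γ(W_l) = Γ(W_r) and the equations defining A⁻, A⁺ have unique solutions (the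
map A ↦ (ρ/2)q²/A² + K₀φ(A/A₀₀) is strictly monotone on a branch containing
both), then A⁻ = A⁺, hence W₀⁻ = W₀⁺ and D⁺ = D⁻ = 0. -/
theorem ghr_fluctuations_well_balanced {E : Type*} [AddCommGroup E]
    (m n ρ : ℝ) (hm : 0 < m) (hn1 : -2 < n) (hn2 : n ≤ 0) (hρ : 0 < ρ)
    (F : ℝ × ℝ × ℝ × ℝ × ℝ → E)
    (Fnum : (ℝ × ℝ × ℝ × ℝ × ℝ) → (ℝ × ℝ × ℝ × ℝ × ℝ) → E)
    (hcons : ∀ W, Fnum W W = F W)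
    (Al ql Kl A0l pel Ar qr Kr A0r per K₀ A₀₀ pe₀ Am Ap : ℝ)
    (hAm : 0 < Am) (hApos : 0 < Ap)
    (s : Set ℝ) (hfun : ℝ → ℝ)
    (hfundef : ∀ A, hfun A = ρ / 2 * ql ^ 2 / A ^ 2
        + K₀ * ((A / A₀₀) ^ m - (A / A₀₀) ^ n))
    (hmono : StrictMonoOn hfun s ∨ StrictAntiOn hfun s)
    (hAms : Am ∈ s) (hAps : Ap ∈ s)
    (heqm : ρ / 2 * ql ^ 2 / Am ^ 2 + K₀ * ((Am / A₀₀) ^ m - (Am / A₀₀) ^ n) + pe₀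
          = ρ / 2 * (ql / Al) ^ 2 + Kl * ((Al / A0l) ^ m - (Al / A0l) ^ n) + pel)
    (heqp : ρ / 2 * qr ^ 2 / Ap ^ 2 + K₀ * ((Ap / A₀₀) ^ m - (Ap / A₀₀) ^ n) + pe₀
          = ρ / 2 * (qr / Ar) ^ 2 + Kr * ((Ar / A0r) ^ m - (Ar / A0r) ^ n) + per)
    (hq : ql = qr)
    (hΓ : ρ / 2 * (ql / Al) ^ 2 + Kl * ((Al / A0l) ^ m - (Al / A0l) ^ n) + pel
        = ρ / 2 * (qr / Ar) ^ 2 + Kr * ((Ar / A0r) ^ m - (Ar / A0r) ^ n) + per) :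
    Am = Ap
    ∧ F (Ap, qr, K₀, A₀₀, pe₀) - Fnum (Am, ql, K₀, A₀₀, pe₀) (Ap, qr, K₀, A₀₀, pe₀) = 0
    ∧ Fnum (Am, ql, K₀, A₀₀, pe₀) (Ap, qr, K₀, A₀₀, pe₀) - F (Am, ql, K₀, A₀₀, pe₀) = 0 := by
  subst hq
  have hval : hfun Am = hfun Ap := by
    rw [hfundef, hfundef]
    have := heqm.trans (hΓ.trans heqp.symm)
    linarith
  have hAmAp : Am = Ap := by
    rcases hmono with h | h
    · exact (h.injOn hAms hAps hval)
    · exact (h.injOn hAms hAps hval)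
  subst hAmAp
  exact ⟨rfl, by rw [hcons]; abel, by rw [hcons]; abel⟩
end
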